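/- Doob optional sampling, discrete case: let t_1 < … < t_N be indices with a filtration of conditional expectations (E_{t_i}) on E (E_{t_i}E_{t_j} = E_{t_i} for i ≤ j), (X_{t_i}) a submartingale (X_{t_i} ∈ range(E_{t_i}) and E_{t_i}(X_{t_j}) ≥ X_{t_i} for i ≤ j), and let (ΔS_i), (ΔT_j) be two finite systems of pairwise disjoint band projections summing to the identity such that ΔS_i commutes with E_{t_i} for all i, ΔT_j commutes with E_{t_j} for all j, and ΔT_j ΔS_i = 0 whenever j < i. Define X_S = Σ_i ΔS_i X_{t_i}, X_T = Σ_j ΔT_j X_{t_j}, and E_S = Σ_i E_{t_i} ΔS_i. Then E_S(X_T) ≥ X_S. -/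

import Mathlib

variable {E : Type*} [AddCommGroup E] [Lattice E]
  [CovariantClass E E (· + ·) (· ≤ ·)] [Module ℝ E]

def DedekindComplete (E : Type*) [AddCommGroup E] [Lattice E] : Prop :=
  ∀ A : Set E, A.Nonempty → BddAbove A → ∃ s, IsLUB A s

def IsWeakUnit (e : E) : Prop :=
  0 < e ∧ ∀ x : E, 0 ≤ x → IsLUB (Set.range fun n : ℕ => x ⊓ n • e) x

def IsBandProj (P : E →ₗ[ℝ] E) : Prop :=
  (∀ x, P (P x) = P x) ∧ ∀ x : E, 0 ≤ x → 0 ≤ P x ∧ P x ≤ x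

def IsCondExp (e : E) (F : E →ₗ[ℝ] E) : Prop :=
  (∀ x, F (F x) = F x) ∧ (∀ x : E, 0 < x → 0 < F x) ∧ F e = e ∧
  ∀ V : ℕ → E, Antitone V → IsGLB (Set.range V) 0 →
    IsGLB (Set.range fun n => F (V n)) 0

/-!
Write `P_k = ∑_{j ≥ k} ΔT_j` for the band projection onto `{T ≥ k}`. Backward induction on `k`
gives `P_k X_k ≤ E_k (∑_{j ≥ k} ΔT_j X_j)`: split off `ΔT_k X_k = E_k (ΔT_k X_k)`, bound
`P_{k+1} X_k ≤ P_{k+1} E_k X_{k+1}` by the submartingale property, and pull `E_k` out, which is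
legitimate because `P_{k+1} = 1 - ∑_{j ≤ k} ΔT_j` and every `ΔT_j` with `j ≤ k` commutes with `E_k`.
Since `ΔS_i` annihilates `ΔT_j` for `j < i`, applying `ΔS_i` to the case `k = i` and summing over
`i` gives the theorem.

That `ΔT_j` commutes with `E_k` for `j ≤ k` is the Riesz space fact that a band projection `P`
commutes with a conditional expectation `F` as soon as `F (P e) = P e`: with the weak unit,
`P x = sup_n (x ⊓ n • P e)`, and order continuity of `F` turns this into `F (P x) ≤ P (F x)`;
the same bound for `1 - P` gives equality.
-/

open Finset Order

section LatticeOrderedGroup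

variable {α : Type*} [AddCommGroup α] [Lattice α] [AddLeftMono α]

theorem inf_add_le_inf_add_inf {a b c : α} (ha : 0 ≤ a) (hb : 0 ≤ b) (hc : 0 ≤ c) :
    a ⊓ (b + c) ≤ a ⊓ b + a ⊓ c := by
  rw [add_inf]
  refine le_inf (inf_le_left.trans (le_add_of_nonneg_left (le_inf ha hb))) ?_
  rw [inf_add]
  exact inf_le_inf_right _ (le_add_of_nonneg_right hc)

theorem inf_add_eq_of_inf_eq_zero {a b c : α} (ha : 0 ≤ a) (hb : 0 ≤ b) (hc : 0 ≤ c)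
    (hac : a ⊓ c = 0) : a ⊓ (b + c) = a ⊓ b :=
  le_antisymm (by simpa [hac] using inf_add_le_inf_add_inf ha hb hc)
    (inf_le_inf_left a (le_add_of_nonneg_right hc))

theorem inf_nsmul_eq_zero {a b : α} (ha : 0 ≤ a) (hb : 0 ≤ b) (hab : a ⊓ b = 0) (n : ℕ) :
    a ⊓ n • b = 0 := by
  induction n with
  | zero => simpa using ha
  | succ n ih => rwa [succ_nsmul, inf_add_eq_of_inf_eq_zero ha (nsmul_nonneg hb n) hb hab]

theorem IsLUB.isGLB_sub_left {ι : Type*} {f : ι → α} {a : α} (h : IsLUB (Set.range f) a) :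
    IsGLB (Set.range fun i => a - f i) 0 := by
  refine ⟨?_, fun c hc => ?_⟩
  · rintro _ ⟨i, rfl⟩
    exact sub_nonneg.mpr (h.1 ⟨i, rfl⟩)
  · have : a ≤ a - c := h.2 <| by
      rintro _ ⟨i, rfl⟩
      exact le_sub_comm.mp (hc ⟨i, rfl⟩)
    simpa using this

theorem eq_of_eq_on_nonneg {M F : Type*} [AddGroup M] [FunLike F α M] [AddMonoidHomClass F α M]
    {f g : F} (h : ∀ x, 0 ≤ x → f x = g x) : f = g := by
  refine DFunLike.ext f g fun x => ?_
  rw [← posPart_sub_negPart x, map_sub, map_sub, h _ (posPart_nonneg x),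
    h _ (negPart_nonneg x)]

end LatticeOrderedGroup

namespace IsBandProj

variable {P Q : E →ₗ[ℝ] E} {x y : E}

theorem nonneg {V : Type*} [AddCommGroup V] [Lattice V] [Module ℝ V] {P : V →ₗ[ℝ] V}
    (hP : IsBandProj P) {x : V} (hx : 0 ≤ x) : 0 ≤ P x :=
  (hP.2 x hx).1

theorem apply_le {V : Type*} [AddCommGroup V] [Lattice V] [Module ℝ V] {P : V →ₗ[ℝ] V}
    (hP : IsBandProj P) {x : V} (hx : 0 ≤ x) : P x ≤ x :=
  (hP.2 x hx).2

theorem monotone (hP : IsBandProj P) : Monotone P := fun x y h => by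
  simpa using hP.nonneg (sub_nonneg.mpr h)

theorem compl (hP : IsBandProj P) : IsBandProj (LinearMap.id - P) := by
  refine ⟨fun x => ?_, fun x hx => ?_⟩
  · simp [hP.1 x]
  · simpa using ⟨hP.apply_le hx, hP.nonneg hx⟩

theorem sub_apply_le_sub_apply (hP : IsBandProj P) (h : x ≤ y) : x - P x ≤ y - P y := by
  simpa using hP.compl.monotone h

theorem inf_sub_apply_eq_zero (hP : IsBandProj P) (hx : 0 ≤ x) (hy : 0 ≤ y) :
    P x ⊓ (y - P y) = 0 := by
  set z := P x ⊓ (y - P y)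
  have hPz : P z ≤ 0 := by simpa [hP.1 y] using hP.monotone (inf_le_right : z ≤ y - P y)
  have hz : z - P z ≤ 0 := by
    simpa [hP.1 x] using hP.sub_apply_le_sub_apply (inf_le_left : z ≤ P x)
  refine le_antisymm ?_ (le_inf (hP.nonneg hx) (sub_nonneg.mpr (hP.apply_le hy)))
  simpa using add_le_add hPz hz

theorem sub_apply_inf_eq_zero (hP : IsBandProj P) (hx : 0 ≤ x) (hy : 0 ≤ y) :
    (x - P x) ⊓ P y = 0 := by
  simpa using hP.compl.inf_sub_apply_eq_zero hx hy

theorem isLUB_inf_nsmul {e : E} (he : IsWeakUnit e) (hP : IsBandProj P) (hx : 0 ≤ x) :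
    IsLUB (Set.range fun n : ℕ => x ⊓ n • P e) (P x) := by
  have hPe : 0 ≤ P e := hP.nonneg he.1.le
  have hePe : 0 ≤ e - P e := sub_nonneg.mpr (hP.apply_le he.1.le)
  have hPx : 0 ≤ P x := hP.nonneg hx
  refine ⟨?_, fun b hb => (he.2 (P x) hPx).2 ?_⟩
  · rintro _ ⟨n, rfl⟩
    have hdisj : n • P e ⊓ (x - P x) = 0 := by
      rw [inf_comm]
      exact inf_nsmul_eq_zero (sub_nonneg.mpr (hP.apply_le hx)) hPe
        (hP.sub_apply_inf_eq_zero hx he.1.le) n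
    calc x ⊓ n • P e = n • P e ⊓ (P x + (x - P x)) := by rw [add_sub_cancel, inf_comm]
      _ = n • P e ⊓ P x := inf_add_eq_of_inf_eq_zero (nsmul_nonneg hPe n) hPx
          (sub_nonneg.mpr (hP.apply_le hx)) hdisj
      _ ≤ P x := inf_le_right
  · rintro _ ⟨n, rfl⟩
    calc P x ⊓ n • e = P x ⊓ (n • P e + n • (e - P e)) := by rw [← smul_add, add_sub_cancel]
      _ = P x ⊓ n • P e := inf_add_eq_of_inf_eq_zero hPx (nsmul_nonneg hPe n)
          (nsmul_nonneg hePe n)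
          (inf_nsmul_eq_zero hPx hePe (hP.inf_sub_apply_eq_zero hx he.1.le) n)
      _ ≤ x ⊓ n • P e := inf_le_inf_right _ (hP.apply_le hx)
      _ ≤ b := hb ⟨n, rfl⟩

theorem apply_apply_eq_zero_of_swap (hP : IsBandProj P) (hQ : IsBandProj Q)
    (h : ∀ x, Q (P x) = 0) (x : E) : P (Q x) = 0 := by
  have key : ∀ x, 0 ≤ x → (P ∘ₗ Q) x = (0 : E →ₗ[ℝ] E) x := by
    intro x hx
    have hle : P (Q x) - Q (P (Q x)) ≤ Q x - Q (Q x) :=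
      hQ.sub_apply_le_sub_apply (hP.apply_le (hQ.nonneg hx))
    rw [h, hQ.1, sub_zero, sub_self] at hle
    exact le_antisymm hle (hP.nonneg (hQ.nonneg hx))
  exact LinearMap.congr_fun (eq_of_eq_on_nonneg key) x

end IsBandProj

namespace IsCondExp

variable {e : E} {F P : E →ₗ[ℝ] E} {x : E}

theorem nonneg {V : Type*} [AddCommGroup V] [Lattice V] [Module ℝ V] {e : V} {F : V →ₗ[ℝ] V}
    (hF : IsCondExp e F) {x : V} (hx : 0 ≤ x) : 0 ≤ F x := by
  rcases hx.eq_or_lt with rfl | hx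
  · rw [map_zero]
  · exact (hF.2.1 x hx).le

theorem monotone (hF : IsCondExp e F) : Monotone F := fun x y h => by
  simpa using hF.nonneg (sub_nonneg.mpr h)

theorem apply_le_of_isBandProj (he : IsWeakUnit e) (hF : IsCondExp e F) (hP : IsBandProj P)
    (hPe : F (P e) = P e) (hx : 0 ≤ x) : F (P x) ≤ P (F x) := by
  have hPe0 : 0 ≤ P e := hP.nonneg he.1.le
  have hanti : Antitone fun n : ℕ => P x - x ⊓ n • P e := fun n m hnm =>
    sub_le_sub_left (inf_le_inf_left x (nsmul_le_nsmul_left hPe0 hnm)) _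
  have hlim := hF.2.2.2 _ hanti (hP.isLUB_inf_nsmul he hx).isGLB_sub_left
  have hbound : ∀ n : ℕ, F (x ⊓ n • P e) ≤ P (F x) := fun n =>
    calc F (x ⊓ n • P e) ≤ F x ⊓ n • P e := by
          refine le_inf (hF.monotone inf_le_left) ?_
          simpa [hPe] using hF.monotone (inf_le_right : x ⊓ n • P e ≤ n • P e)
      _ ≤ P (F x) := (hP.isLUB_inf_nsmul he (hF.nonneg hx)).1 ⟨n, rfl⟩
  refine sub_nonpos.mp (hlim.2 ?_)
  rintro _ ⟨n, rfl⟩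
  simpa using sub_le_sub_left (hbound n) (F (P x))

theorem apply_comm_of_isBandProj (he : IsWeakUnit e) (hF : IsCondExp e F) (hP : IsBandProj P)
    (hPe : F (P e) = P e) (x : E) : F (P x) = P (F x) := by
  have key : ∀ x, 0 ≤ x → (F ∘ₗ P) x = (P ∘ₗ F) x := by
    intro x hx
    have hcompl := hF.apply_le_of_isBandProj he hP.compl (by simp [hF.2.2.1, hPe]) hx
    simp only [LinearMap.sub_apply, LinearMap.id_apply, map_sub, sub_le_sub_iff_left] at hcompl
    exact le_antisymm (hF.apply_le_of_isBandProj he hP hPe hx) hcompl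
  exact LinearMap.congr_fun (eq_of_eq_on_nonneg key) x

end IsCondExp

section StoppingTime

variable {ι : Type*} [Fintype ι] [LinearOrder ι]

theorem map_sum_Ici_eq_map_sum [LocallyFiniteOrderTop ι] [LocallyFiniteOrderBot ι]
    {R M : Type*} [Semiring R] [AddCommMonoid M] [Module R M] {P : M →ₗ[R] M}
    {Q : ι → M →ₗ[R] M} {k : ι} (h : ∀ j < k, ∀ x, P (Q j x) = 0) (y : ι → M) :
    P (∑ j ∈ Ici k, Q j (y j)) = P (∑ j, Q j (y j)) := by
  have hcompl : (Ici k)ᶜ = Iio k := by ext; simp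
  rw [← sum_add_sum_compl (Ici k), map_add, hcompl, map_sum P _ (Iio k),
    sum_eq_zero fun j hj => h j (mem_Iio.mp hj) _, add_zero]

theorem sum_Ioi_map_comm [LocallyFiniteOrderTop ι] [LocallyFiniteOrderBot ι]
    {R M : Type*} [Semiring R] [AddCommGroup M] [Module R M] {Q : ι → M →ₗ[R] M}
    (hQ : ∀ x, ∑ j, Q j x = x) {F : M →ₗ[R] M} {k : ι}
    (hcomm : ∀ j ≤ k, ∀ x, Q j (F x) = F (Q j x)) (x : M) :
    ∑ j ∈ Ioi k, Q j (F x) = F (∑ j ∈ Ioi k, Q j x) := by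
  have hsplit : ∀ z, ∑ j ∈ Ioi k, Q j z = z - ∑ j ∈ Iic k, Q j z := by
    have hcompl : (Iic k)ᶜ = Ioi k := by ext; simp
    intro z
    rw [eq_sub_iff_add_eq', ← hcompl, sum_add_sum_compl, hQ]
  rw [hsplit, hsplit, map_sub, map_sum, sum_congr rfl fun j hj => hcomm j (mem_Iic.mp hj) x]

theorem sum_Ici_le_map_sum_Ici [LocallyFiniteOrderTop ι] [LocallyFiniteOrderBot ι] [SuccOrder ι]
    {Et : ι → E →ₗ[ℝ] E} (hEt : ∀ i, Monotone (Et i))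
    (hfiltr : ∀ i j, i ≤ j → ∀ x, Et i (Et j x) = Et i x)
    {X : ι → E} (hadapt : ∀ i, Et i (X i) = X i) (hsubmart : ∀ i j, i ≤ j → X i ≤ Et i (X j))
    {ΔT : ι → E →ₗ[ℝ] E} (hΔT : ∀ j, Monotone (ΔT j)) (hTsum : ∀ x, ∑ j, ΔT j x = x)
    (hTcomm : ∀ j k, j ≤ k → ∀ x, ΔT j (Et k x) = Et k (ΔT j x)) (k : ι) :
    ∑ j ∈ Ici k, ΔT j (X k) ≤ Et k (∑ j ∈ Ici k, ΔT j (X j)) := by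
  induction k using WellFoundedGT.induction with
  | _ k ih =>
  rw [Ici_eq_cons_Ioi, sum_cons, sum_cons, map_add]
  have hstop : ΔT k (X k) = Et k (ΔT k (X k)) := by rw [← hTcomm k k le_rfl, hadapt]
  refine add_le_add hstop.le ?_
  by_cases hmax : IsMax k
  · simp [Ioi_eq_empty.mpr hmax]
  have hk := le_succ k
  have hIoi := Ici_succ_eq_Ioi_of_not_isMax hmax
  calc ∑ j ∈ Ioi k, ΔT j (X k) ≤ ∑ j ∈ Ioi k, ΔT j (Et k (X (succ k))) :=
        sum_le_sum fun j _ => hΔT j (hsubmart _ _ hk)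
    _ = Et k (∑ j ∈ Ici (succ k), ΔT j (X (succ k))) := by
        rw [hIoi]; exact sum_Ioi_map_comm hTsum (fun j hj => hTcomm j k hj) _
    _ ≤ Et k (Et (succ k) (∑ j ∈ Ici (succ k), ΔT j (X j))) :=
        hEt k (ih _ (lt_succ_of_not_isMax hmax))
    _ = Et k (∑ j ∈ Ioi k, ΔT j (X j)) := by rw [hfiltr _ _ hk, hIoi]

end StoppingTime

theorem doob_optional_sampling_discrete_general
    (e : E) (he : IsWeakUnit e)
    (N : ℕ) (Et : Fin N → (E →ₗ[ℝ] E))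
    (hEt : ∀ i, IsCondExp e (Et i))
    (hfiltr : ∀ i j : Fin N, i ≤ j → ∀ x : E,
      Et i (Et j x) = Et i x ∧ Et j (Et i x) = Et i x)
    (X : Fin N → E)
    (hadapt : ∀ i, Et i (X i) = X i)
    (hsubmart : ∀ i j : Fin N, i ≤ j → X i ≤ Et i (X j))
    (ΔS ΔT : Fin N → (E →ₗ[ℝ] E))
    (hΔS : ∀ i, IsBandProj (ΔS i)) (hΔT : ∀ j, IsBandProj (ΔT j))
    (hTsum : ∀ x : E, ∑ j, ΔT j x = x)
    (hScomm : ∀ i, ∀ x : E, ΔS i (Et i x) = Et i (ΔS i x))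
    (hTcomm : ∀ j, ∀ x : E, ΔT j (Et j x) = Et j (ΔT j x))
    (hST : ∀ i j : Fin N, j < i → ∀ x : E, ΔT j (ΔS i x) = 0) :
    ∑ i, ΔS i (X i) ≤ ∑ i, Et i (ΔS i (∑ j, ΔT j (X j))) := by
  have hTEt : ∀ j k, j ≤ k → ∀ x, ΔT j (Et k x) = Et k (ΔT j x) := by
    intro j k hjk x
    have hfix : Et k (ΔT j e) = ΔT j e := by
      have h : ΔT j e = Et j (ΔT j e) := by rw [← hTcomm, (hEt j).2.2.1]
      rw [h, (hfiltr j k hjk _).2]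
    exact ((hEt k).apply_comm_of_isBandProj he (hΔT j) hfix x).symm
  have hSTswap : ∀ i, ∀ j < i, ∀ x, ΔS i (ΔT j x) = 0 := fun i j hji =>
    (hΔS i).apply_apply_eq_zero_of_swap (hΔT j) (hST i j hji)
  have hbackward := sum_Ici_le_map_sum_Ici (fun i => (hEt i).monotone)
    (fun i j h x => (hfiltr i j h x).1) hadapt hsubmart (fun j => (hΔT j).monotone) hTsum hTEt
  refine sum_le_sum fun i _ => ?_
  calc ΔS i (X i) = ΔS i (∑ j ∈ Ici i, ΔT j (X i)) := by
        rw [map_sum_Ici_eq_map_sum (hSTswap i) fun _ => X i, hTsum]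
    _ ≤ ΔS i (Et i (∑ j ∈ Ici i, ΔT j (X j))) := (hΔS i).monotone (hbackward i)
    _ = Et i (ΔS i (∑ j ∈ Ici i, ΔT j (X j))) := hScomm i _
    _ = Et i (ΔS i (∑ j, ΔT j (X j))) := by rw [map_sum_Ici_eq_map_sum (hSTswap i)]

/-- Doob's optional sampling theorem, discrete case: for a finite filtration
`(Et i)`, a submartingale `(X i)`, and simple stopping times `S ≤ T` encoded by the
pairwise disjoint band projections `(ΔS i)` and `(ΔT j)` summing to the identity
(with `ΔT j ∘ ΔS i = 0` for `j < i`), one has `E_S(X_T) ≥ X_S`. -/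
theorem doob_optional_sampling_discrete
    (hE : DedekindComplete E) (e : E) (he : IsWeakUnit e)
    (N : ℕ) (Et : Fin N → (E →ₗ[ℝ] E))
    (hEt : ∀ i, IsCondExp e (Et i))
    (hfiltr : ∀ i j : Fin N, i ≤ j → ∀ x : E,
      Et i (Et j x) = Et i x ∧ Et j (Et i x) = Et i x)
    (X : Fin N → E)
    (hadapt : ∀ i, Et i (X i) = X i)
    (hsubmart : ∀ i j : Fin N, i ≤ j → X i ≤ Et i (X j))
    (ΔS ΔT : Fin N → (E →ₗ[ℝ] E))
    (hΔS : ∀ i, IsBandProj (ΔS i)) (hΔT : ∀ j, IsBandProj (ΔT j))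
    (hSdisj : ∀ i j, i ≠ j → ∀ x : E, ΔS i (ΔS j x) = 0)
    (hTdisj : ∀ i j, i ≠ j → ∀ x : E, ΔT i (ΔT j x) = 0)
    (hSsum : ∀ x : E, ∑ i, ΔS i x = x)
    (hTsum : ∀ x : E, ∑ j, ΔT j x = x)
    (hScomm : ∀ i, ∀ x : E, ΔS i (Et i x) = Et i (ΔS i x))
    (hTcomm : ∀ j, ∀ x : E, ΔT j (Et j x) = Et j (ΔT j x))
    (hST : ∀ i j : Fin N, j < i → ∀ x : E, ΔT j (ΔS i x) = 0) :
    ∑ i, ΔS i (X i) ≤ ∑ i, Et i (ΔS i (∑ j, ΔT j (X j))) :=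
  doob_optional_sampling_discrete_general e he N Et hEt hfiltr X hadapt hsubmart ΔS ΔT hΔS hΔT hTsum
    hScomm hTcomm hST
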